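/- Let s = 4, q = 3 and let c ∈ ℝ^4 have pairwise distinct entries. If A ∈ ℝ^{4×4} is lower triangular, K ∈ ℝ^{4×4} is diagonal, and V_2^T (AC − CA − K) V_3 = 0 where C = diag(c_i), then the third diagonal entry of K vanishes: K_{33} = 0. -/

import Mathlib

/-
Write `M = AC − CA − K`. The hypothesis says `xᵀ M y = 0` for every `x` in the column space of
`V₂` and every `y` in that of `V₃`; choose `x i = c i − c₄` and `y j = (c j − c₁)(c j − c₂)`.
Then `x` vanishes beyond index 3 and `y` before it, so `xᵢ yⱼ ≠ 0` forces `i ≤ 3 ≤ j`. The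
commutator `(AC − CA)ᵢⱼ = Aᵢⱼ (cⱼ − cᵢ)` vanishes for `i ≤ j`, and the diagonal `K` only meets
`i = j = 3`, leaving `0 = xᵀ M y = −(c₃ − c₄)(c₃ − c₁)(c₃ − c₂) K₃₃`.
Indices here are 1-based, whereas `Fin 4` counts from 0, so `K₃₃` is `K 2 2`.
-/

open Matrix BigOperators

/-- Vandermonde matrix `V_k = (𝟙, c, c², …, c^{k−1}) ∈ ℝ^{4×k}` (entrywise powers). -/
def Vand (c : Fin 4 → ℝ) (k : ℕ) : Matrix (Fin 4) (Fin k) ℝ :=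
  Matrix.of fun i j => c i ^ (j : ℕ)

section

variable {n R : Type*} [Fintype n] [CommRing R]

theorem dotProduct_mulVec_mulVec_eq_zero {m k : Type*} [Fintype m] [Fintype k]
    {V : Matrix n m R} {M : Matrix n n R} {W : Matrix n k R} (h : Vᵀ * M * W = 0)
    (u : m → R) (w : k → R) : (V *ᵥ u) ⬝ᵥ (M *ᵥ (W *ᵥ w)) = 0 := by
  rw [← vecMul_transpose, ← dotProduct_mulVec, mulVec_mulVec, mulVec_mulVec, h, zero_mulVec,
    dotProduct_zero]

variable [DecidableEq n]

theorem mul_diagonal_sub_diagonal_mul_apply (A : Matrix n n R) (c : n → R) (i j : n) :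
    (A * diagonal c - diagonal c * A) i j = A i j * (c j - c i) := by
  rw [Matrix.sub_apply, mul_diagonal, diagonal_mul]
  ring

variable [LinearOrder n] {x y : n → R} {p : n}

theorem dotProduct_commutator_diagonal_mulVec_eq_zero {A : Matrix n n R}
    (hA : ∀ i j, i < j → A i j = 0) (c : n → R) (hx : ∀ i, p < i → x i = 0)
    (hy : ∀ j, j < p → y j = 0) : x ⬝ᵥ ((A * diagonal c - diagonal c * A) *ᵥ y) = 0 := by
  simp only [dotProduct, mulVec, Finset.mul_sum]
  refine Finset.sum_eq_zero fun i _ => Finset.sum_eq_zero fun j _ => ?_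
  rw [mul_diagonal_sub_diagonal_mul_apply]
  rcases lt_or_ge p i with hpi | hip
  · simp [hx i hpi]
  rcases lt_or_ge j p with hjp | hpj
  · simp [hy j hjp]
  rcases (hip.trans hpj).lt_or_eq with hij | rfl
  · simp [hA i j hij]
  · simp

theorem Matrix.IsDiag.dotProduct_mulVec_eq {K : Matrix n n R} (hK : K.IsDiag)
    (hx : ∀ i, p < i → x i = 0) (hy : ∀ j, j < p → y j = 0) :
    x ⬝ᵥ (K *ᵥ y) = x p * K p p * y p := by
  rw [← hK.diagonal_diag, dotProduct, Finset.sum_eq_single p]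
  · simp [mulVec_diagonal, mul_assoc]
  · intro i _ hip
    rcases hip.lt_or_gt with hlt | hgt
    · simp [mulVec_diagonal, hy i hlt]
    · simp [hx i hgt]
  · simp

end

theorem Vand_two_mulVec (c : Fin 4 → ℝ) (t : ℝ) :
    Vand c 2 *ᵥ ![-t, 1] = fun i => c i - t := by
  ext i
  simp only [Vand, mulVec, dotProduct, of_apply, Fin.sum_univ_two, Fin.val_zero, Fin.val_one,
    cons_val_zero, cons_val_one]
  ring

theorem Vand_three_mulVec (c : Fin 4 → ℝ) (s t : ℝ) :
    Vand c 3 *ᵥ ![s * t, -(s + t), 1] = fun i => (c i - s) * (c i - t) := by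
  ext i
  simp only [Vand, mulVec, dotProduct, of_apply, Fin.sum_univ_three, Fin.val_zero, Fin.val_one,
    Fin.val_two, cons_val_zero, cons_val_one, cons_val_two, tail_cons, head_cons]
  ring

/-- Theorem 5.1(b): for `s = 4`, `q = 3`, distinct nodes, lower triangular `A` and
diagonal `K`, the condition `V_2ᵀ (AC − CA − K) V_3 = 0` forces `K_{33} = 0`
(the third diagonal entry, index `2` in 0-based numbering). -/
theorem stmt8 (c : Fin 4 → ℝ) (hc : Function.Injective c)
    (A K : Matrix (Fin 4) (Fin 4) ℝ)
    (hA : ∀ i j : Fin 4, i < j → A i j = 0) (hK : K.IsDiag)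
    (h : (Vand c 2)ᵀ *
        (A * Matrix.diagonal c - Matrix.diagonal c * A - K) * Vand c 3 = 0) :
    K 2 2 = 0 := by
  have key := dotProduct_mulVec_mulVec_eq_zero h ![-c 3, 1] ![c 0 * c 1, -(c 0 + c 1), 1]
  rw [Vand_two_mulVec, Vand_three_mulVec] at key
  have hx : ∀ i : Fin 4, 2 < i → c i - c 3 = 0 := by
    intro i hi
    fin_cases i <;> simp_all
  have hy : ∀ j : Fin 4, j < 2 → (c j - c 0) * (c j - c 1) = 0 := by
    intro j hj
    fin_cases j <;> simp_all
  rw [sub_mulVec, dotProduct_sub, dotProduct_commutator_diagonal_mulVec_eq_zero hA c hx hy,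
    hK.dotProduct_mulVec_eq hx hy, zero_sub, neg_eq_zero] at key
  have hne : ∀ i j : Fin 4, i ≠ j → c i - c j ≠ 0 := fun i j hij =>
    sub_ne_zero.mpr (hc.ne hij)
  simpa [hne 2 3, hne 2 0, hne 2 1] using key
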